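/- arXiv:math/0604437 — 5 statements merged into one kernel-verified Lean document; each statement's English description precedes it below -/
import Mathlib

section
/- Let a : ℕ → ℝ be a sequence with a(0) = 1, a(n) ≥ 0 for all n, and (2n+1)·a(n) ≥ (1/2)·∑_{k=0}^{n−1} a(k)·a(n−1−k) for every n ≥ 1. Let u : ℕ → ℝ be defined by u(0) = 1 and (2n+1)·u(n) = (1/2)·∑_{k=0}^{n−1} u(k)·u(n−1−k) for n ≥ 1. Then a(n) ≥ u(n) for every n ∈ ℕ. -/
/-!
Both recurrences express the `n`-th term through a self-convolution of the earlier terms, and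
a self-convolution is monotone in nonnegative sequences. Strong induction on `n` then carries
`0 ≤ u k ≤ a k` from all `k < n` to `n`.
-/

open Finset

section SelfConvolution

variable {K : Type*} [Field K] [LinearOrder K] [IsStrictOrderedRing K]

lemma sum_range_mul_reflect_nonneg {u : ℕ → K} {n : ℕ} (hu : ∀ k < n, 0 ≤ u k) :
    0 ≤ ∑ k ∈ range n, u k * u (n - 1 - k) :=
  sum_nonneg fun k hk => by
    have hkn := mem_range.mp hk
    exact mul_nonneg (hu k hkn) (hu (n - 1 - k) (by omega))

lemma sum_range_mul_reflect_le_of_le {u a : ℕ → K} {n : ℕ}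
    (h : ∀ k < n, 0 ≤ u k ∧ u k ≤ a k) :
    ∑ k ∈ range n, u k * u (n - 1 - k) ≤ ∑ k ∈ range n, a k * a (n - 1 - k) := by
  refine sum_le_sum fun k hk => ?_
  have hkn := mem_range.mp hk
  obtain ⟨huk, hak⟩ := h k hkn
  obtain ⟨hul, hal⟩ := h (n - 1 - k) (by omega)
  exact mul_le_mul hak hal hul (huk.trans hak)

theorem nonneg_and_le_of_convolution_recurrence {u a c : ℕ → K} (hc : ∀ n, 1 ≤ n → 0 < c n)
    (hu0 : 0 ≤ u 0) (h0 : u 0 ≤ a 0)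
    (hu : ∀ n, 1 ≤ n → c n * u n = ∑ k ∈ range n, u k * u (n - 1 - k))
    (ha : ∀ n, 1 ≤ n → ∑ k ∈ range n, a k * a (n - 1 - k) ≤ c n * a n) :
    ∀ n, 0 ≤ u n ∧ u n ≤ a n := by
  intro n
  induction n using Nat.strong_induction_on with
  | _ n ih =>
    rcases Nat.eq_zero_or_pos n with rfl | hn
    · exact ⟨hu0, h0⟩
    · have hconv_nonneg := sum_range_mul_reflect_nonneg fun k hk => (ih k hk).1
      have hconv_le := sum_range_mul_reflect_le_of_le ih
      rw [← hu n hn] at hconv_nonneg hconv_le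
      exact ⟨nonneg_of_mul_nonneg_right hconv_nonneg (hc n hn),
        le_of_mul_le_mul_left (hconv_le.trans (ha n hn)) (hc n hn)⟩

end SelfConvolution

theorem stmt_1_general (a u : ℕ → ℝ) (ha0 : a 0 = 1)
    (harec : ∀ n : ℕ, 1 ≤ n →
      (2 * (n : ℝ) + 1) * a n ≥ (1 / 2) * ∑ k ∈ Finset.range n, a k * a (n - 1 - k))
    (hu0 : u 0 = 1)
    (hurec : ∀ n : ℕ, 1 ≤ n →
      (2 * (n : ℝ) + 1) * u n = (1 / 2) * ∑ k ∈ Finset.range n, u k * u (n - 1 - k)) :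
    ∀ n : ℕ, a n ≥ u n := by
  have hcomparison := nonneg_and_le_of_convolution_recurrence (u := u) (a := a)
    (c := fun n : ℕ => 2 * (2 * (n : ℝ) + 1))
    (fun n _ => by positivity) (by rw [hu0]; exact zero_le_one) (by rw [hu0, ha0])
    (fun n hn => by linarith [hurec n hn]) (fun n hn => by linarith [harec n hn])
  exact fun n => (hcomparison n).2

/-- If `a` is a nonnegative sequence with `a 0 = 1` satisfying the coefficient
inequality `(2n+1)·a n ≥ (1/2)·∑_{k<n} a k · a (n-1-k)` for `n ≥ 1`, and `u` is
the sequence defined by the corresponding equality, then `a n ≥ u n` for all `n`. -/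
theorem stmt_1 (a u : ℕ → ℝ) (ha0 : a 0 = 1) (hann : ∀ n, 0 ≤ a n)
    (harec : ∀ n : ℕ, 1 ≤ n →
      (2 * (n : ℝ) + 1) * a n ≥ (1 / 2) * ∑ k ∈ Finset.range n, a k * a (n - 1 - k))
    (hu0 : u 0 = 1)
    (hurec : ∀ n : ℕ, 1 ≤ n →
      (2 * (n : ℝ) + 1) * u n = (1 / 2) * ∑ k ∈ Finset.range n, u k * u (n - 1 - k)) :
    ∀ n : ℕ, a n ≥ u n :=
  stmt_1_general a u ha0 harec hu0 hurec
end

section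
/- Let u : ℕ → ℝ be defined by u(0) = 1 and (2n+1)·u(n) = (1/2)·∑_{k=0}^{n−1} u(k)·u(n−1−k) for n ≥ 1. Then for every real t with |t| < π/√2, the series ∑_{n≥0} u(n)·t^{2n+1} converges and its sum equals √2·tan(t/√2). -/
open Real Finset
open scoped NNReal ENNReal

private lemma cos_ne_zero_of_norm_lt' {z : ℂ} (hz : ‖z‖ < π / 2) : Complex.cos z ≠ 0 := by
  intro h
  rw [Complex.cos_eq_zero_iff] at h
  obtain ⟨k, hk⟩ := h
  have hz' : ‖z‖ = |2 * (k : ℝ) + 1| * (π / 2) := by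
    rw [hk]
    have h2 : ((2 * (k : ℂ) + 1) * π / 2) = (((2 * (k : ℝ) + 1) * (π / 2) : ℝ) : ℂ) := by
      push_cast; ring
    rw [h2, Complex.norm_real, Real.norm_eq_abs, abs_mul,
      abs_of_pos (by positivity : (0:ℝ) < π / 2)]
  have h1 : (1 : ℤ) ≤ |2 * k + 1| := by
    rcases abs_cases (2 * k + 1) with ⟨h', _⟩ | ⟨h', _⟩ <;> omega
  have h1' : (1 : ℝ) ≤ |2 * (k : ℝ) + 1| := by
    have h3 := (@Int.cast_le ℝ _ _ _).2 h1
    rw [Int.cast_abs, Int.cast_one] at h3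
    push_cast at h3
    linarith
  have hπ : (0:ℝ) < π / 2 := by positivity
  nlinarith [hz, hz'.symm.trans_lt hz]

/-- Core lemma: the power series of complex tan on a ball of radius `r2 < π/2`,
with coefficients identified via the recurrence. -/
private lemma tan_series' (u : ℕ → ℝ) (hu0 : u 0 = 1)
    (hurec : ∀ n : ℕ, 1 ≤ n →
      (2 * (n : ℝ) + 1) * u n = (1 / 2) * ∑ k ∈ Finset.range n, u k * u (n - 1 - k))
    {r1 r2 : ℝ≥0} (h01 : 0 < r1) (h12 : (r1:ℝ) < r2) (h2π : (r2:ℝ) < π / 2) :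
    ∃ c : ℕ → ℂ,
      (∀ z : ℂ, ‖z‖ < r2 → HasSum (fun n => c n * z ^ n) (Complex.tan z)) ∧
      (∀ m : ℕ, (Even m → c m = 0) ∧
        (Odd m → c m = (((2:ℝ) ^ (m / 2) * u (m / 2) : ℝ) : ℂ))) := by
  have hr2 : (0:ℝ≥0) < r2 := by exact_mod_cast h01.trans (by exact_mod_cast h12)
  have hdiff : DifferentiableOn ℂ Complex.tan (Metric.closedBall 0 r2) := by
    intro z hz
    have hzn : ‖z‖ ≤ r2 := by simpa using Metric.mem_closedBall.mp hz
    exact (Complex.differentiableAt_tan.mpr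
      (cos_ne_zero_of_norm_lt' (lt_of_le_of_lt hzn h2π))).differentiableWithinAt
  have H := hdiff.hasFPowerSeriesOnBall hr2
  set p := cauchyPowerSeries Complex.tan 0 r2 with hp
  set c : ℕ → ℂ := fun n => p.coeff n with hc
  refine ⟨c, ?_, ?_⟩
  case _ =>
    intro z hz
    have hz' : z ∈ Metric.eball (0:ℂ) r2 := by
      rw [EMetric.mem_ball, edist_zero_right]
      exact_mod_cast hz
    have h := H.hasSum hz'
    simp only [zero_add] at h
    convert h using 2 with n
    · rfl
    rw [FormalMultilinearSeries.apply_eq_pow_smul_coeff, smul_eq_mul]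
    ring
  -- the sum of the series equals tan
  have hsum_tan : ∀ z : ℂ, ‖z‖ < r2 → HasSum (fun n => c n * z ^ n) (Complex.tan z) := by
    intro z hz
    have hz' : z ∈ Metric.eball (0:ℂ) r2 := by
      rw [EMetric.mem_ball, edist_zero_right]
      exact_mod_cast hz
    have h := H.hasSum hz'
    simp only [zero_add] at h
    convert h using 2 with n
    · rfl
    rw [FormalMultilinearSeries.apply_eq_pow_smul_coeff, smul_eq_mul]
    ring
  have hsummable : ∀ z : ℂ, ‖z‖ < r2 → Summable (fun n => ‖c n * z ^ n‖) := by
    intro z hz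
    have hrad : (‖z‖₊ : ℝ≥0∞) < p.radius := by
      refine lt_of_lt_of_le ?_ H.r_le
      exact_mod_cast hz
    have h := p.summable_norm_mul_pow hrad
    convert h using 2 with n
    rw [norm_mul, norm_pow, p.norm_apply_eq_norm_coef, coe_nnnorm]
  -- the ODE coefficients
  set b : ℕ → ℂ := fun n => (if n = 0 then 1 else 0) + ∑ k ∈ range (n+1), c k * c (n - k)
    with hbdef
  have hsum_ode : ∀ z : ℂ, ‖z‖ < r2 →
      HasSum (fun n => b n * z ^ n) (1 + Complex.tan z ^ 2) := by
    intro z hz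
    have h1 : HasSum (fun n => (if n = 0 then (1:ℂ) else 0) * z ^ n) 1 := by
      have h := hasSum_ite_eq (0:ℕ) (1:ℂ)
      convert h using 1
      funext n
      by_cases hn : n = 0 <;> simp [hn]
    have hs := hsummable z hz
    have h2 := hasSum_sum_range_mul_of_summable_norm hs hs
    rw [(hsum_tan z hz).tsum_eq] at h2
    have h2' : HasSum (fun n => (∑ k ∈ range (n+1), c k * c (n - k)) * z ^ n)
        (Complex.tan z ^ 2) := by
      convert h2 using 2 with n
      · rfl
      · rw [Finset.sum_mul]
        refine Finset.sum_congr rfl fun k hk => ?_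
        have hk' : k ≤ n := Nat.lt_succ_iff.mp (Finset.mem_range.mp hk)
        have hzp : z ^ n = z ^ k * z ^ (n - k) := by
          rw [← pow_add, Nat.add_sub_cancel' hk']
        rw [hzp]; ring
      · rw [sq]
    have h12 := h1.add h2'
    convert h12 using 1
    funext n
    simp only [hbdef, add_mul]
  -- q2, the series of 1 + tan^2
  set q2 := FormalMultilinearSeries.ofScalars ℂ b with hq2
  have hb_rad : (r1 : ℝ≥0∞) ≤ q2.radius := by
    have hr1r2 : ‖((r1:ℝ) : ℂ)‖ < r2 := by
      rw [Complex.norm_real, Real.norm_eq_abs, abs_of_nonneg r1.coe_nonneg]; exact h12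
    have hsummable' := (hsum_ode _ hr1r2).summable
    have htend := hsummable'.tendsto_atTop_zero.norm
    obtain ⟨C, hC⟩ := htend.bddAbove_range
    refine q2.le_radius_of_bound C fun n => ?_
    have heq : ‖q2 n‖ * (r1:ℝ) ^ n = ‖b n * ((r1:ℝ):ℂ) ^ n‖ := by
      rw [norm_mul, norm_pow, Complex.norm_real, Real.norm_eq_abs,
        abs_of_nonneg r1.coe_nonneg, FormalMultilinearSeries.ofScalars_norm]
    rw [heq]
    exact hC (Set.mem_range_self n)
  have Hq2 : HasFPowerSeriesOnBall (fun z => 1 + Complex.tan z ^ 2) q2 0 r1 := by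
    refine ⟨hb_rad, by exact_mod_cast h01, fun {y} hy => ?_⟩
    have hy' : ‖y‖ < r1 := by
      rw [EMetric.mem_ball, edist_zero_right] at hy
      exact_mod_cast hy
    have h := hsum_ode y (hy'.trans h12)
    simp only [zero_add]
    convert h using 2 with n
    · rfl
    rw [FormalMultilinearSeries.ofScalars_apply_eq, smul_eq_mul]
  -- the derivative series
  have Hd := H.fderiv
  set L : (ℂ →L[ℂ] ℂ) →L[ℂ] ℂ := ContinuousLinearMap.apply ℂ ℂ (1:ℂ) with hL
  have Hq1 := L.comp_hasFPowerSeriesOnBall Hd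
  have heq : (⇑L ∘ fderiv ℂ Complex.tan) =ᶠ[nhds (0:ℂ)] (fun z => 1 + Complex.tan z ^ 2) := by
    have hr2' : (0:ℝ) < r2 := lt_of_le_of_lt r1.coe_nonneg h12
    filter_upwards [Metric.ball_mem_nhds (0:ℂ) hr2'] with z hz
    have hz' : ‖z‖ < r2 := by simpa using hz
    have hcos : Complex.cos z ≠ 0 := cos_ne_zero_of_norm_lt' (hz'.trans h2π)
    have hderiv : deriv Complex.tan z = 1 / Complex.cos z ^ 2 :=
      (Complex.hasDerivAt_tan hcos).deriv
    have h1 : (⇑L ∘ fderiv ℂ Complex.tan) z = deriv Complex.tan z := by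
      simp only [Function.comp_apply, hL, ContinuousLinearMap.apply_apply]
      rfl
    have h2 : (1 : ℂ) + Complex.tan z ^ 2 = 1 / Complex.cos z ^ 2 := by
      rw [Complex.tan_eq_sin_div_cos, div_pow]
      field_simp
      rw [add_comm]; exact Complex.sin_sq_add_cos_sq z
    rw [h1, hderiv, h2]
  have hpq : L.compFormalMultilinearSeries p.derivSeries = q2 :=
    Hq1.hasFPowerSeriesAt.eq_formalMultilinearSeries_of_eventually Hq2.hasFPowerSeriesAt heq
  have hrec : ∀ n : ℕ, ((n:ℂ) + 1) * c (n+1) = b n := by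
    intro n
    have h1 : (L.compFormalMultilinearSeries p.derivSeries).coeff n = q2.coeff n := by rw [hpq]
    have h2 : (L.compFormalMultilinearSeries p.derivSeries).coeff n
        = ((n:ℂ)+1) * p.coeff (n+1) := by
      show (L.compFormalMultilinearSeries p.derivSeries) n 1 = _
      rw [ContinuousLinearMap.compFormalMultilinearSeries_apply,
        ContinuousLinearMap.compContinuousMultilinearMap_coe]
      simp only [Function.comp_apply, hL, ContinuousLinearMap.apply_apply]
      have h1' : (1 : Fin n → ℂ) = fun _ => (1:ℂ) := rfl
      rw [h1', p.derivSeries_apply_diag]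
      rw [nsmul_eq_mul]
      push_cast
      rfl
    have h3 : q2.coeff n = b n := by
      show q2 n 1 = b n
      have h1' : (1 : Fin n → ℂ) = fun _ => (1:ℂ) := rfl
      rw [h1', FormalMultilinearSeries.ofScalars_apply_eq]
      simp
    rw [← h2, h1, h3]
  -- c 0 = 0
  have hc0 : c 0 = 0 := by
    have := H.coeff_zero 1
    rw [Complex.tan_zero] at this
    exact this
  -- the induction
  have hbdef' : b = fun n => (if n = 0 then 1 else 0) + ∑ k ∈ range (n+1), c k * c (n - k) :=
    hbdef
  clear_value b c
  clear hpq Hq1 Hq2 hb_rad hsum_ode hsummable heq hq2 H Hd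
  intro m
  induction m using Nat.strong_induction_on with
  | _ m IH =>
    rcases m with _ | n
    · exact ⟨fun _ => hc0, fun h => absurd h (by simp)⟩
    · have hr := hrec n
      have hne : ((n:ℂ) + 1) ≠ 0 := Nat.cast_add_one_ne_zero n
      constructor
      · -- n+1 even, n odd
        intro hev
        have hodd : n % 2 = 1 := by
          rcases Nat.even_iff.mp hev with h
          omega
        have hb0 : b n = 0 := by
          rw [hbdef']
          simp only
          rw [if_neg (by omega), zero_add]
          apply Finset.sum_eq_zero
          intro k hk
          have hk' : k ≤ n := Nat.lt_succ_iff.mp (Finset.mem_range.mp hk)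
          rcases Nat.even_or_odd k with hke | hko
          · rw [(IH k (by omega)).1 hke, zero_mul]
          · have hnk : Even (n - k) := by
              rw [Nat.even_sub hk']
              simp [Nat.even_iff, hodd, Nat.odd_iff.mp hko]
            rw [(IH (n - k) (by omega)).1 hnk, mul_zero]
        rw [hb0] at hr
        exact (mul_eq_zero.mp hr).resolve_left hne
      · -- n+1 odd, n even, n = 2j
        intro hodd
        have hneven : n % 2 = 0 := by
          have := Nat.odd_iff.mp hodd
          omega
        obtain ⟨j, hj⟩ : ∃ j, n = 2 * j := ⟨n / 2, by omega⟩
        subst hj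
        rcases Nat.eq_zero_or_pos j with hj0 | hjpos
        · subst hj0
          have hb : b 0 = 1 := by rw [hbdef']; simp [hc0]
          rw [hb] at hr
          norm_num at hr
          rw [show 2*0+1 = 1 by rfl, hr]
          norm_num [hu0]
        · -- main case
          have hfil : (range (2*j+1)).filter (fun k => Odd k)
              = (range j).image (fun i => 2*i+1) := by
            ext k
            simp only [Finset.mem_filter, Finset.mem_range, Finset.mem_image, Nat.odd_iff]
            constructor
            · rintro ⟨hk, hk2⟩
              exact ⟨k / 2, by omega, by omega⟩
            · rintro ⟨i, hi, rfl⟩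
              omega
          have hterm : ∀ i ∈ range j,
              c (2*i+1) * c (2*j - (2*i+1))
                = (((2:ℝ)^(j-1) * (u i * u (j - 1 - i)) : ℝ) : ℂ) := by
            intro i hi
            have hij : i < j := Finset.mem_range.mp hi
            have h1 : c (2*i+1) = (((2:ℝ) ^ i * u i : ℝ) : ℂ) := by
              have := (IH (2*i+1) (by omega)).2 ⟨i, by ring⟩
              rwa [show (2*i+1)/2 = i by omega] at this
            have h2 : 2*j - (2*i+1) = 2*(j-1-i)+1 := by omega
            have h3 : c (2*j - (2*i+1)) = (((2:ℝ) ^ (j-1-i) * u (j-1-i) : ℝ) : ℂ) := by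
              rw [h2]
              have := (IH (2*(j-1-i)+1) (by omega)).2 ⟨j-1-i, by ring⟩
              rwa [show (2*(j-1-i)+1)/2 = j-1-i by omega] at this
            rw [h1, h3]
            push_cast
            have hp' : (2:ℂ)^(j-1) = 2^i * 2^(j-1-i) := by
              rw [← pow_add]; congr 1; omega
            rw [hp']; ring
          have hbsum : b (2*j) = (((2:ℝ)^(j-1) * (2 * (2*(j:ℝ)+1) * u j) : ℝ) : ℂ) := by
            rw [hbdef']
            simp only
            rw [if_neg (by omega), zero_add]
            rw [← Finset.sum_filter_of_ne (p := fun k => Odd k) ?hzero]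
            case hzero =>
              intro k hk hne'
              by_contra hke
              have hkev : Even k := Nat.not_odd_iff_even.mp hke
              have hk' : k ≤ 2*j := Nat.lt_succ_iff.mp (Finset.mem_range.mp hk)
              exact hne' (by rw [(IH k (by omega)).1 hkev, zero_mul])
            rw [hfil, Finset.sum_image (by intro a _ b _ h; simp only at h; omega)]
            rw [Finset.sum_congr rfl hterm]
            have hu := hurec j hjpos
            have hms : ∑ i ∈ range j, (((2:ℝ)^(j-1) * (u i * u (j - 1 - i)) : ℝ) : ℂ)
                = (((2:ℝ)^(j-1) * ∑ i ∈ range j, u i * u (j - 1 - i) : ℝ) : ℂ) := by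
              push_cast
              rw [Finset.mul_sum]
            rw [hms]
            have hsum : ∑ i ∈ range j, u i * u (j - 1 - i) = 2 * ((2*(j:ℝ)+1) * u j) := by
              rw [hu]; ring
            norm_cast
            rw [hsum]
            push_cast
            ring
          rw [hbsum] at hr
          have hcval : c (2*j+1) = (((2:ℝ)^j * u j : ℝ) : ℂ) := by
            have hne2 : (2 * (j:ℂ) + 1) ≠ 0 := by
              have h0 : ((2*(j:ℝ)+1 : ℝ) : ℂ) ≠ 0 := by
                rw [Ne, Complex.ofReal_eq_zero]; positivity
              push_cast at h0 ⊢
              exact h0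
            have key : (2 * (j:ℂ) + 1) * c (2*j+1)
                = (2 * (j:ℂ) + 1) * (((2:ℝ)^j * u j : ℝ) : ℂ) := by
              push_cast at hr ⊢
              rw [hr]
              rw [show ((2:ℂ))^j = 2^(j-1) * 2 by
                rw [← pow_succ, show j - 1 + 1 = j by omega]]
              ring
            exact mul_left_cancel₀ hne2 key
          rw [hcval]
          rw [show (2*j+1)/2 = j by omega]

/-- The power series `∑ u n · t^(2n+1)`, where `u` is defined by `u 0 = 1` and
`(2n+1)·u n = (1/2)·∑_{k<n} u k · u (n-1-k)`, converges to `√2·tan(t/√2)` for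
`|t| < π/√2`. -/
theorem stmt_3 (u : ℕ → ℝ) (hu0 : u 0 = 1)
    (hurec : ∀ n : ℕ, 1 ≤ n →
      (2 * (n : ℝ) + 1) * u n = (1 / 2) * ∑ k ∈ Finset.range n, u k * u (n - 1 - k)) :
    ∀ t : ℝ, |t| < π / Real.sqrt 2 →
      HasSum (fun n : ℕ => u n * t ^ (2 * n + 1))
        (Real.sqrt 2 * Real.tan (t / Real.sqrt 2)) := by
  intro t ht
  have h2pos : (0:ℝ) < Real.sqrt 2 := by positivity
  have h22 : Real.sqrt 2 * Real.sqrt 2 = 2 := Real.mul_self_sqrt (by norm_num)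
  set x : ℝ := t / Real.sqrt 2 with hxdef
  have hx : |x| < π / 2 := by
    rw [hxdef, abs_div, abs_of_pos h2pos, div_lt_iff₀ h2pos]
    calc |t| < π / Real.sqrt 2 := ht
      _ = π / 2 * Real.sqrt 2 := by
        rw [div_eq_iff (ne_of_gt h2pos)]
        nlinarith [h22, Real.pi_pos]
  -- choose radii
  have hd : (0:ℝ) < (π/2 - |x|) / 3 := by linarith
  set d : ℝ := (π/2 - |x|)/3 with hddef
  have habs : (0:ℝ) ≤ |x| := abs_nonneg x
  set r1 : ℝ≥0 := ⟨|x| + d, by positivity⟩ with hr1def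
  set r2 : ℝ≥0 := ⟨|x| + 2*d, by positivity⟩ with hr2def
  have h01 : 0 < r1 := by
    rw [← NNReal.coe_lt_coe]
    show (0:ℝ) < |x| + d
    linarith
  have h12 : (r1:ℝ) < r2 := by
    show |x| + d < |x| + 2*d
    linarith
  have h2π : (r2:ℝ) < π / 2 := by
    show |x| + 2*d < π/2
    rw [hddef]; linarith
  obtain ⟨c, hsum, hcoeff⟩ := tan_series' u hu0 hurec h01 h12 h2π
  have hxr2 : ‖(x:ℂ)‖ < r2 := by
    rw [Complex.norm_real, Real.norm_eq_abs]
    show |x| < |x| + 2*d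
    linarith
  have hW := hsum (x:ℂ) hxr2
  -- restrict to odd indices
  set w : ℕ → ℂ := fun n => c n * (x:ℂ) ^ n with hwdef
  have hinj : Function.Injective (fun n : ℕ => 2*n+1) := by
    intro a b h
    simp only at h
    omega
  have hvan : ∀ m, m ∉ Set.range (fun n : ℕ => 2*n+1) → w m = 0 := by
    intro m hm
    have hev : Even m := by
      by_contra hodd
      have := Nat.not_even_iff_odd.mp hodd
      obtain ⟨k, hk⟩ := this
      exact hm ⟨k, by simp only; omega⟩
    rw [hwdef]
    simp only
    rw [(hcoeff m).1 hev, zero_mul]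
  have hodd : HasSum (fun n : ℕ => w (2*n+1)) (Complex.tan (x:ℂ)) := by
    have := (Function.Injective.hasSum_iff hinj hvan).mpr hW
    exact this
  have hodd2 : HasSum (fun n : ℕ => ((Real.sqrt 2 : ℝ) : ℂ) * w (2*n+1))
      (((Real.sqrt 2 : ℝ) : ℂ) * Complex.tan (x:ℂ)) := hodd.mul_left _
  -- identify the terms
  have hterm : ∀ n : ℕ, ((Real.sqrt 2 : ℝ) : ℂ) * w (2*n+1)
      = (((u n * t ^ (2*n+1) : ℝ)) : ℂ) := by
    intro n
    rw [hwdef]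
    simp only
    have hcv : c (2*n+1) = (((2:ℝ) ^ n * u n : ℝ) : ℂ) := by
      have := (hcoeff (2*n+1)).2 ⟨n, by ring⟩
      rwa [show (2*n+1)/2 = n by omega] at this
    rw [hcv]
    have hreal : Real.sqrt 2 * ((2:ℝ)^n * u n) * x ^ (2*n+1) = u n * t ^ (2*n+1) := by
      rw [hxdef, div_pow]
      have hs : Real.sqrt 2 ^ (2*n+1) = 2^n * Real.sqrt 2 := by
        rw [pow_succ, pow_mul]
        congr 1
        rw [sq]
        rw [h22]
      rw [hs]
      have h2n : ((2:ℝ)^n) ≠ 0 := by positivity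
      field_simp
    calc ((Real.sqrt 2 : ℝ) : ℂ) * ((((2:ℝ) ^ n * u n : ℝ) : ℂ) * (x:ℂ) ^ (2*n+1))
        = (((Real.sqrt 2 * ((2:ℝ)^n * u n) * x ^ (2*n+1) : ℝ)) : ℂ) := by
          push_cast; ring
      _ = (((u n * t ^ (2*n+1) : ℝ)) : ℂ) := by rw [hreal]
  have hval : ((Real.sqrt 2 : ℝ) : ℂ) * Complex.tan (x:ℂ)
      = (((Real.sqrt 2 * Real.tan x : ℝ)) : ℂ) := by
    rw [← Complex.ofReal_tan]
    push_cast
    ring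
  rw [hval] at hodd2
  have hodd3 : HasSum (fun n : ℕ => (((u n * t ^ (2*n+1) : ℝ)) : ℂ))
      (((Real.sqrt 2 * Real.tan x : ℝ) : ℂ)) := by
    have hfe : (fun n : ℕ => ((Real.sqrt 2 : ℝ) : ℂ) * w (2*n+1))
        = fun n : ℕ => (((u n * t ^ (2*n+1) : ℝ)) : ℂ) := funext hterm
    rwa [hfe] at hodd2
  exact Complex.hasSum_ofReal.mp hodd3
end

section
/- For every real x with 0 < |x| < π/2, tan(x) = ∑_{k=1}^{∞} (2^{2k}·(2^{2k}−1)·|B_{2k}| / (2k)!) · x^{2k−1}, where B_{2k} denotes the 2k-th Bernoulli number. -/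
open Real

section TanHelpers

open Filter Finset Topology

lemma prod_split (f : ℕ → ℝ) (n : ℕ) :
    ∏ j ∈ range (2 * n), f j = (∏ m ∈ range n, f (2 * m)) * ∏ m ∈ range n, f (2 * m + 1) := by
  induction n with
  | zero => simp
  | succ n ih =>
    have h : 2 * (n + 1) = (2 * n) + 1 + 1 := by ring
    rw [h, prod_range_succ, prod_range_succ, ih, prod_range_succ, prod_range_succ]
    ring

lemma cos_prod (y : ℝ) (hy : |y| < π / 2) :
    Tendsto (fun n : ℕ => ∏ m ∈ range n, (1 - 4 * y ^ 2 / (((2 * m + 1 : ℕ) : ℝ) ^ 2 * π ^ 2)))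
      atTop (𝓝 (cos y)) := by
  rcases eq_or_ne y 0 with rfl | hy0
  · simpa using (tendsto_const_nhds : Tendsto (fun _ : ℕ => (1:ℝ)) atTop (𝓝 1))
  have hπ := pi_pos
  have habs := abs_lt.1 hy
  have hsin : sin y ≠ 0 := by
    rcases lt_or_gt_of_ne hy0 with h | h
    · have h2 : sin (-y) > 0 := sin_pos_of_pos_of_lt_pi (by linarith) (by linarith)
      rw [sin_neg] at h2; linarith
    · have h2 : sin y > 0 := sin_pos_of_pos_of_lt_pi h (by linarith)
      linarith
  set s := y / π with hs
  have hys : π * s = y := by rw [hs]; field_simp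
  have hs2 : s ^ 2 < 1 / 4 := by
    have h1 : |s| < 1 / 2 := by
      rw [hs, abs_div, abs_of_pos hπ, div_lt_iff₀ hπ]
      linarith
    calc s ^ 2 = |s| ^ 2 := (sq_abs s).symm
    _ < (1/2) ^ 2 := by nlinarith [abs_nonneg s]
    _ = 1/4 := by norm_num
  have hQ : Tendsto (fun n : ℕ => π * s * ∏ j ∈ range n, ((1:ℝ) - s ^ 2 / ((j:ℝ) + 1) ^ 2))
      atTop (𝓝 (sin y)) := by
    simpa [hys] using Real.tendsto_euler_sin_prod s
  have hP : Tendsto (fun n : ℕ => 2 * y * ∏ j ∈ range (2 * n),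
      ((1:ℝ) - (2 * s) ^ 2 / ((j:ℝ) + 1) ^ 2)) atTop (𝓝 (sin (2 * y))) := by
    have h2 : Tendsto (fun n : ℕ => 2 * n) atTop atTop :=
      tendsto_atTop_atTop.2 fun b => ⟨b, fun a ha => by omega⟩
    have h3 := (Real.tendsto_euler_sin_prod (2 * s)).comp h2
    rw [show π * (2 * s) = 2 * y by rw [← hys]; ring] at h3
    exact h3
  have hgpos : ∀ n : ℕ, (0:ℝ) < ∏ j ∈ range n, ((1:ℝ) - s ^ 2 / ((j:ℝ) + 1) ^ 2) := by
    intro n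
    apply Finset.prod_pos
    intro j _
    have hj : (1:ℝ) ≤ ((j:ℝ) + 1) ^ 2 := by nlinarith [Nat.cast_nonneg (α := ℝ) j]
    have h4 : s ^ 2 / ((j:ℝ) + 1) ^ 2 ≤ s ^ 2 := div_le_self (sq_nonneg s) hj
    nlinarith
  have hdiv : Tendsto (fun n : ℕ => (2 * y * ∏ j ∈ range (2 * n),
      ((1:ℝ) - (2 * s) ^ 2 / ((j:ℝ) + 1) ^ 2)) /
      (2 * (π * s * ∏ j ∈ range n, ((1:ℝ) - s ^ 2 / ((j:ℝ) + 1) ^ 2))))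
      atTop (𝓝 (cos y)) := by
    have h2 : sin (2 * y) / (2 * sin y) = cos y := by
      rw [sin_two_mul]; field_simp
    rw [← h2]
    exact hP.div (hQ.const_mul 2) (by simpa using hsin)
  refine hdiv.congr fun n => ?_
  rw [prod_split (fun j => (1:ℝ) - (2 * s) ^ 2 / ((j:ℝ) + 1) ^ 2) n]
  have he : ∀ m ∈ range n, ((1:ℝ) - (2 * s) ^ 2 / (((2 * m + 1 : ℕ):ℝ) + 1) ^ 2)
      = (1:ℝ) - s ^ 2 / ((m:ℝ) + 1) ^ 2 := by
    intro m _
    have h5 : (((2 * m + 1 : ℕ):ℝ) + 1) = 2 * ((m:ℝ) + 1) := by push_cast; ring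
    rw [h5]
    have hm : ((m:ℝ) + 1) ^ 2 ≠ 0 := by positivity
    rw [mul_pow]
    rw [mul_pow]
    congr 1
    rw [div_eq_div_iff (by positivity) hm]
    ring
  have ho : ∀ m ∈ range n, ((1:ℝ) - (2 * s) ^ 2 / (((2 * m : ℕ):ℝ) + 1) ^ 2)
      = 1 - 4 * y ^ 2 / (((2 * m + 1 : ℕ):ℝ) ^ 2 * π ^ 2) := by
    intro m _
    have h1 : (((2 * m : ℕ):ℝ) + 1) = ((2 * m + 1 : ℕ):ℝ) := by push_cast; ring
    rw [h1]
    have hm : ((2 * m + 1 : ℕ):ℝ) ≠ 0 := by positivity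
    congr 1
    rw [hs, div_eq_div_iff (by positivity) (by positivity)]
    field_simp
    ring
  rw [Finset.prod_congr rfl ho, Finset.prod_congr rfl he, hys,
    div_eq_iff (by exact mul_ne_zero two_ne_zero (mul_ne_zero hy0 (ne_of_gt (hgpos n))))]
  ring

lemma factor_pos {y : ℝ} (hy : |y| < π / 2) (m : ℕ) :
    (0:ℝ) < 1 - 4 * y ^ 2 / (((2 * m + 1 : ℕ) : ℝ) ^ 2 * π ^ 2) := by
  have hπ := pi_pos
  have h1 : (1:ℝ) ≤ ((2 * m + 1 : ℕ) : ℝ) := by exact_mod_cast Nat.one_le_iff_ne_zero.2 (by omega)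
  have h2 : 4 * y ^ 2 < π ^ 2 := by
    have := abs_lt.1 hy
    nlinarith [abs_nonneg y, sq_abs y]
  have hc : (1:ℝ) ≤ ((2 * m + 1 : ℕ) : ℝ) ^ 2 := by nlinarith
  have h3 : π ^ 2 ≤ ((2 * m + 1 : ℕ) : ℝ) ^ 2 * π ^ 2 := by
    have := mul_le_mul_of_nonneg_right hc (sq_nonneg π)
    linarith
  have h4 : 4 * y ^ 2 / (((2 * m + 1 : ℕ) : ℝ) ^ 2 * π ^ 2) < 1 := by
    rw [div_lt_one (by nlinarith)]
    linarith
  linarith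

lemma log_cos_hasSum (y : ℝ) (hy : |y| < π / 2) :
    HasSum (fun m : ℕ => Real.log (1 - 4 * y ^ 2 / (((2 * m + 1 : ℕ) : ℝ) ^ 2 * π ^ 2)))
      (Real.log (cos y)) := by
  have hπ := pi_pos
  have hcos : 0 < cos y := cos_pos_of_mem_Ioo (by constructor <;> [linarith [(abs_lt.1 hy).1]; exact (abs_lt.1 hy).2])
  set f : ℕ → ℝ := fun m => Real.log (1 - 4 * y ^ 2 / (((2 * m + 1 : ℕ) : ℝ) ^ 2 * π ^ 2)) with hf
  have hfle : ∀ m, f m ≤ 0 := by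
    intro m
    apply Real.log_nonpos (le_of_lt (factor_pos hy m))
    have h1 : (0:ℝ) ≤ 4 * y ^ 2 / (((2 * m + 1 : ℕ) : ℝ) ^ 2 * π ^ 2) := by positivity
    linarith
  have htend : Tendsto (fun n => ∑ m ∈ range n, f m) atTop (𝓝 (Real.log (cos y))) := by
    have h1 := ((Real.continuousAt_log (ne_of_gt hcos)).tendsto).comp (cos_prod y hy)
    refine h1.congr fun n => ?_
    rw [Function.comp_apply, Real.log_prod]
    intro m _
    exact ne_of_gt (factor_pos hy m)
  have hsummable : Summable f := by
    rw [← summable_neg_iff]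
    apply summable_of_sum_range_le (c := -Real.log (cos y)) (fun m => by linarith [hfle m])
    intro n
    have hmono : Monotone (fun n => ∑ m ∈ range n, -f m) := by
      intro a b hab
      apply Finset.sum_le_sum_of_subset_of_nonneg (Finset.range_subset_range.2 hab)
      intro m _ _; linarith [hfle m]
    have := hmono.ge_of_tendsto (by simpa only [Finset.sum_neg_distrib] using htend.neg) n
    simpa using this
  have := hsummable.hasSum
  rwa [tendsto_nhds_unique (hsummable.hasSum.tendsto_sum_nat) htend] at this

lemma denom_pos {y : ℝ} (hy : |y| < π / 2) (m : ℕ) :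
    (0:ℝ) < ((2 * m + 1 : ℕ) : ℝ) ^ 2 * π ^ 2 - 4 * y ^ 2 := by
  have h := factor_pos hy m
  have hA : (0:ℝ) < ((2 * m + 1 : ℕ) : ℝ) ^ 2 * π ^ 2 := by positivity
  have hid : ((2 * m + 1 : ℕ) : ℝ) ^ 2 * π ^ 2 * (1 - 4 * y ^ 2 / (((2 * m + 1 : ℕ) : ℝ) ^ 2 * π ^ 2))
      = ((2 * m + 1 : ℕ) : ℝ) ^ 2 * π ^ 2 - 4 * y ^ 2 := by
    field_simp
  nlinarith [mul_pos hA h]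

lemma aux_summable : Summable (fun m : ℕ => 1/((m:ℝ)+1)^2) := by
  have h := Real.summable_one_div_nat_pow.2 (one_lt_two)
  have := (summable_nat_add_iff 1).2 h
  simpa using this

lemma tan_pf (x : ℝ) (hx : |x| < π / 2) :
    HasSum (fun m : ℕ => 8 * x / (((2 * m + 1 : ℕ) : ℝ) ^ 2 * π ^ 2 - 4 * x ^ 2)) (tan x) := by
  have hπ := pi_pos
  set r : ℝ := (|x| + π / 2) / 2 with hr
  have hxr : |x| < r := by rw [hr]; linarith
  have hrpi : r < π / 2 := by rw [hr]; linarith [abs_nonneg x]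
  have hr0 : 0 < r := lt_of_le_of_lt (abs_nonneg x) hxr
  have hrabs : |r| < π / 2 := by rwa [abs_of_pos hr0]
  have hAr : ∀ m : ℕ, 0 < ((2 * m + 1 : ℕ) : ℝ) ^ 2 * π ^ 2 - 4 * r ^ 2 :=
    fun m => denom_pos hrabs m
  -- summability of the bound
  set D : ℝ := π ^ 2 * (1 - 4 * r ^ 2 / π ^ 2) with hD
  have hq : 4 * r ^ 2 / π ^ 2 < 1 := by
    rw [div_lt_one (by positivity)]; nlinarith
  have hDpos : 0 < D := by rw [hD]; have : (0:ℝ) < 1 - 4 * r ^ 2 / π ^ 2 := by linarith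
                           positivity
  have husum : Summable (fun m : ℕ => 8 * r / (((2 * m + 1 : ℕ) : ℝ) ^ 2 * π ^ 2 - 4 * r ^ 2)) := by
    have hC : ∀ m : ℕ, 8 * r / (((2 * m + 1 : ℕ) : ℝ) ^ 2 * π ^ 2 - 4 * r ^ 2)
        ≤ 8 * r / D * (1 / ((m:ℝ) + 1) ^ 2) := by
      intro m
      have hc1 : ((m:ℝ) + 1) ≤ ((2 * m + 1 : ℕ) : ℝ) := by
        push_cast; linarith [Nat.cast_nonneg (α := ℝ) m]
      have hc0 : (0:ℝ) < (m:ℝ) + 1 := by positivity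
      have hcsq : ((m:ℝ) + 1) ^ 2 ≤ ((2 * m + 1 : ℕ) : ℝ) ^ 2 := by nlinarith
      have key : ((m:ℝ) + 1) ^ 2 * D ≤ ((2 * m + 1 : ℕ) : ℝ) ^ 2 * π ^ 2 - 4 * r ^ 2 := by
        have h1 : ((m:ℝ) + 1) ^ 2 * D = ((m:ℝ) + 1) ^ 2 * π ^ 2 - ((m:ℝ) + 1) ^ 2 * (4 * r ^ 2) := by
          rw [hD]; field_simp
        have h2 : (1:ℝ) ≤ ((m:ℝ) + 1) ^ 2 := by nlinarith
        have h3 : ((m:ℝ) + 1) ^ 2 * π ^ 2 ≤ ((2 * m + 1 : ℕ) : ℝ) ^ 2 * π ^ 2 :=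
          mul_le_mul_of_nonneg_right hcsq (sq_nonneg π)
        rw [h1]
        nlinarith
      calc 8 * r / (((2 * m + 1 : ℕ) : ℝ) ^ 2 * π ^ 2 - 4 * r ^ 2)
          ≤ 8 * r / (((m:ℝ) + 1) ^ 2 * D) :=
            div_le_div_of_nonneg_left (by positivity) (by positivity) key
        _ = 8 * r / D * (1 / ((m:ℝ) + 1) ^ 2) := by
            rw [div_mul_div_comm, mul_one, mul_comm D (((m:ℝ) + 1) ^ 2)]
    exact Summable.of_nonneg_of_le (fun m => le_of_lt (div_pos (by positivity) (hAr m))) hC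
      (aux_summable.mul_left _)
  -- series of functions
  have hball : ∀ y : ℝ, y ∈ Metric.ball (0:ℝ) r → |y| < π / 2 := by
    intro y hy
    rw [Metric.mem_ball, Real.dist_eq, sub_zero] at hy
    linarith
  have hderiv : ∀ (m : ℕ) (y : ℝ), y ∈ Metric.ball (0:ℝ) r →
      HasDerivAt (fun z => Real.log (1 - 4 * z ^ 2 / (((2 * m + 1 : ℕ) : ℝ) ^ 2 * π ^ 2)))
        (-(8 * y) / (((2 * m + 1 : ℕ) : ℝ) ^ 2 * π ^ 2 - 4 * y ^ 2)) y := by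
    intro m y hy
    have hypi := hball y hy
    have hv : 0 < 1 - 4 * y ^ 2 / (((2 * m + 1 : ℕ) : ℝ) ^ 2 * π ^ 2) := factor_pos hypi m
    have hinner : HasDerivAt (fun z : ℝ => 1 - 4 * z ^ 2 / (((2 * m + 1 : ℕ) : ℝ) ^ 2 * π ^ 2))
        (-(8 * y) / (((2 * m + 1 : ℕ) : ℝ) ^ 2 * π ^ 2)) y := by
      have h1 : HasDerivAt (fun z : ℝ => z ^ 2) (2 * y) y := by
        simpa using hasDerivAt_pow 2 y
      have h2 := ((h1.const_mul (4:ℝ)).div_const ((((2 * m + 1 : ℕ) : ℝ)) ^ 2 * π ^ 2)).const_sub 1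
      refine h2.congr_deriv ?_
      rw [neg_div]
      ring
    have h3 := (Real.hasDerivAt_log (ne_of_gt hv)).comp y hinner
    refine h3.congr_deriv ?_
    have hAm : (0:ℝ) < ((2 * m + 1 : ℕ) : ℝ) ^ 2 * π ^ 2 := by positivity
    have hd := denom_pos hypi m
    rw [show (1 : ℝ) - 4 * y ^ 2 / (((2 * m + 1 : ℕ) : ℝ) ^ 2 * π ^ 2)
        = ((((2 * m + 1 : ℕ) : ℝ) ^ 2 * π ^ 2) - 4 * y ^ 2) / (((2 * m + 1 : ℕ) : ℝ) ^ 2 * π ^ 2)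
        from by field_simp, inv_div, div_mul_div_comm,
      mul_comm ((((2 * m + 1 : ℕ) : ℝ) ^ 2 * π ^ 2) - 4 * y ^ 2) ((((2 * m + 1 : ℕ) : ℝ) ^ 2 * π ^ 2)),
      mul_div_mul_left _ _ (ne_of_gt hAm)]
  have hbound : ∀ (m : ℕ) (y : ℝ), y ∈ Metric.ball (0:ℝ) r →
      ‖-(8 * y) / (((2 * m + 1 : ℕ) : ℝ) ^ 2 * π ^ 2 - 4 * y ^ 2)‖
        ≤ 8 * r / (((2 * m + 1 : ℕ) : ℝ) ^ 2 * π ^ 2 - 4 * r ^ 2) := by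
    intro m y hy
    have hypi := hball y hy
    rw [Metric.mem_ball, Real.dist_eq, sub_zero] at hy
    have hd : 0 < ((2 * m + 1 : ℕ) : ℝ) ^ 2 * π ^ 2 - 4 * y ^ 2 := denom_pos hypi m
    rw [norm_div, Real.norm_eq_abs, Real.norm_eq_abs, abs_neg, abs_mul,
      abs_of_pos hd, abs_of_pos (by norm_num : (0:ℝ) < 8)]
    apply div_le_div₀ (by linarith) ?_ (hAr m) ?_
    · linarith [le_of_lt hy]
    · have h5 : 4 * y ^ 2 ≤ 4 * r ^ 2 := by nlinarith [sq_abs y, abs_nonneg y, le_of_lt hy]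
      linarith
  have hmem : x ∈ Metric.ball (0:ℝ) r := by
    rw [Metric.mem_ball, Real.dist_eq, sub_zero]; exact hxr
  have h0mem : (0:ℝ) ∈ Metric.ball (0:ℝ) r := Metric.mem_ball_self hr0
  have hg0 : Summable (fun m : ℕ =>
      Real.log (1 - 4 * (0:ℝ) ^ 2 / (((2 * m + 1 : ℕ) : ℝ) ^ 2 * π ^ 2))) := by
    have h : (fun m : ℕ => Real.log (1 - 4 * (0:ℝ) ^ 2 / (((2 * m + 1 : ℕ) : ℝ) ^ 2 * π ^ 2)))
        = fun _ => (0:ℝ) := by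
      funext m; norm_num
    rw [h]; exact summable_zero
  have hD2 := hasDerivAt_tsum_of_isPreconnected husum Metric.isOpen_ball
    (convex_ball (0:ℝ) r).isPreconnected hderiv hbound h0mem hg0 hmem
  have hEq : (fun z => ∑' m : ℕ, Real.log (1 - 4 * z ^ 2 / (((2 * m + 1 : ℕ) : ℝ) ^ 2 * π ^ 2)))
      =ᶠ[𝓝 x] fun z => Real.log (cos z) := by
    filter_upwards [Metric.isOpen_ball.mem_nhds hmem] with z hz
    exact (log_cos_hasSum z (hball z hz)).tsum_eq
  have hlogcos : HasDerivAt (fun z => Real.log (cos z))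
      (∑' m : ℕ, -(8 * x) / (((2 * m + 1 : ℕ) : ℝ) ^ 2 * π ^ 2 - 4 * x ^ 2)) x :=
    hD2.congr_of_eventuallyEq hEq.symm
  have hcosx : 0 < cos x :=
    cos_pos_of_mem_Ioo ⟨by linarith [(abs_lt.1 hx).1], (abs_lt.1 hx).2⟩
  have hlogcos2 : HasDerivAt (fun z => Real.log (cos z)) (-tan x) x := by
    have h1 := (Real.hasDerivAt_log (ne_of_gt hcosx)).comp x (Real.hasDerivAt_cos x)
    refine h1.congr_deriv ?_
    rw [tan_eq_sin_div_cos]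
    field_simp
  have huniq : (∑' m : ℕ, -(8 * x) / (((2 * m + 1 : ℕ) : ℝ) ^ 2 * π ^ 2 - 4 * x ^ 2)) = -tan x :=
    hlogcos.unique hlogcos2
  have hsumg' : Summable (fun m : ℕ => -(8 * x) / (((2 * m + 1 : ℕ) : ℝ) ^ 2 * π ^ 2 - 4 * x ^ 2)) :=
    Summable.of_norm_bounded husum (fun m => hbound m x hmem)
  have hhs := hsumg'.hasSum
  rw [huniq] at hhs
  simpa [neg_div, neg_neg] using hhs.neg

set_option maxHeartbeats 1000000 in
lemma odd_pow_hasSum (k : ℕ) (hk : k ≠ 0) :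
    HasSum (fun m : ℕ => 1 / (((2 * m + 1 : ℕ)) : ℝ) ^ (2 * k))
      ((1 - (1:ℝ) / 2 ^ (2 * k)) *
        ((-1 : ℝ) ^ (k + 1) * (2 : ℝ) ^ (2 * k - 1) * π ^ (2 * k) *
          bernoulli (2 * k) / Nat.factorial (2 * k))) := by
  set S : ℝ := (-1 : ℝ) ^ (k + 1) * (2 : ℝ) ^ (2 * k - 1) * π ^ (2 * k) *
      bernoulli (2 * k) / Nat.factorial (2 * k) with hS
  have hzeta : HasSum (fun n : ℕ => 1 / (n : ℝ) ^ (2 * k)) S := hasSum_zeta_nat hk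
  have heven : HasSum (fun m : ℕ => 1 / ((2 * m : ℕ) : ℝ) ^ (2 * k)) ((1 / 2 ^ (2 * k)) * S) := by
    have := hzeta.mul_left ((1:ℝ) / 2 ^ (2 * k))
    refine this.congr_fun fun m => ?_
    push_cast [mul_pow]
    ring
  have hodd_summable : Summable (fun m : ℕ => 1 / (((2 * m + 1 : ℕ)) : ℝ) ^ (2 * k)) := by
    have hinj : Function.Injective (fun m : ℕ => 2 * m + 1) := fun a b h => by simp only [] at h; omega
    exact hzeta.summable.comp_injective hinj
  have hodd := hodd_summable.hasSum
  have hsum : HasSum (fun n : ℕ => 1 / (n : ℝ) ^ (2 * k)) (1 / 2 ^ (2 * k) * S + ∑' m : ℕ, 1 / (((2 * m + 1 : ℕ)) : ℝ) ^ (2 * k)) :=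
    HasSum.even_add_odd (f := fun n : ℕ => 1 / (n : ℝ) ^ (2 * k)) heven hodd
  have huniq := hsum.unique hzeta
  have : ∑' m : ℕ, 1 / (((2 * m + 1 : ℕ)) : ℝ) ^ (2 * k) = (1 - (1:ℝ) / 2 ^ (2 * k)) * S := by
    linear_combination huniq
  rwa [this] at hodd

lemma bern_abs (n : ℕ) (hn : n ≠ 0) :
    |((bernoulli (2 * n) : ℚ) : ℝ)| = (-1 : ℝ) ^ (n + 1) * ((bernoulli (2 * n) : ℚ) : ℝ) := by
  have hπ := pi_pos
  set B : ℝ := ((bernoulli (2 * n) : ℚ) : ℝ) with hB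
  set S : ℝ := (-1 : ℝ) ^ (n + 1) * (2 : ℝ) ^ (2 * n - 1) * π ^ (2 * n) *
      B / Nat.factorial (2 * n) with hS
  have hzeta : HasSum (fun m : ℕ => 1 / (m : ℝ) ^ (2 * n)) S := hasSum_zeta_nat hn
  have hSpos : 0 < S := by
    have h1 : (1:ℝ) ≤ S := by
      have := le_hasSum hzeta 1 (fun i _ => by positivity)
      simpa using this
    linarith
  have hfac : (0:ℝ) < (Nat.factorial (2 * n) : ℝ) := by positivity
  have hC : (0:ℝ) < (2 : ℝ) ^ (2 * n - 1) * π ^ (2 * n) / Nat.factorial (2 * n) := by positivity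
  have hBpos : 0 < (-1 : ℝ) ^ (n + 1) * B := by
    have hkey : S = ((-1 : ℝ) ^ (n + 1) * B) *
        ((2 : ℝ) ^ (2 * n - 1) * π ^ (2 * n) / Nat.factorial (2 * n)) := by
      rw [hS]; ring
    nlinarith [hSpos, hC, hkey]
  calc |B| = |(-1 : ℝ) ^ (n + 1) * B| := by
        rw [abs_mul, abs_pow, abs_neg, abs_one, one_pow, one_mul]
    _ = (-1 : ℝ) ^ (n + 1) * B := abs_of_pos hBpos

lemma fiber_hasSum (x : ℝ) (hx : x ≠ 0) (k : ℕ) :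
    HasSum (fun m : ℕ => 2 / x * (4 * x ^ 2 / (((2 * m + 1 : ℕ) : ℝ) ^ 2 * π ^ 2)) ^ (k + 1))
      ((2 : ℝ) ^ (2 * (k + 1)) * ((2 : ℝ) ^ (2 * (k + 1)) - 1) *
        |((bernoulli (2 * (k + 1)) : ℚ) : ℝ)| / (Nat.factorial (2 * (k + 1)) : ℝ) *
        x ^ (2 * (k + 1) - 1)) := by
  have hπ := pi_pos
  have h := (odd_pow_hasSum (k + 1) (by omega)).mul_left (2 / x * (4 * x ^ 2 / π ^ 2) ^ (k + 1))
  have hfun : (fun m : ℕ => 2 / x * (4 * x ^ 2 / π ^ 2) ^ (k + 1)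
        * (1 / (((2 * m + 1 : ℕ)) : ℝ) ^ (2 * (k + 1))))
      = fun m : ℕ => 2 / x * (4 * x ^ 2 / (((2 * m + 1 : ℕ) : ℝ) ^ 2 * π ^ 2)) ^ (k + 1) := by
    funext m
    have hc : (((2 * m + 1 : ℕ)) : ℝ) ≠ 0 := by positivity
    have hsplit : (4 * x ^ 2 / ((((2 * m + 1 : ℕ)) : ℝ) ^ 2 * π ^ 2))
        = (4 * x ^ 2 / π ^ 2) * (1 / (((2 * m + 1 : ℕ)) : ℝ) ^ 2) := by
      field_simp
    rw [hsplit, mul_pow, ← mul_assoc]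
    congr 1
    rw [one_div, one_div, inv_pow, ← pow_mul]
  have hval : 2 / x * (4 * x ^ 2 / π ^ 2) ^ (k + 1) * ((1 - (1:ℝ) / 2 ^ (2 * (k + 1))) *
        ((-1 : ℝ) ^ ((k + 1) + 1) * (2 : ℝ) ^ (2 * (k + 1) - 1) * π ^ (2 * (k + 1)) *
          ((bernoulli (2 * (k + 1)) : ℚ) : ℝ) / Nat.factorial (2 * (k + 1))))
      = (2 : ℝ) ^ (2 * (k + 1)) * ((2 : ℝ) ^ (2 * (k + 1)) - 1) *
        |((bernoulli (2 * (k + 1)) : ℚ) : ℝ)| / (Nat.factorial (2 * (k + 1)) : ℝ) *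
        x ^ (2 * (k + 1) - 1) := by
    rw [bern_abs (k + 1) (by omega)]
    have hfac : ((Nat.factorial (2 * (k + 1))) : ℝ) ≠ 0 := by positivity
    have hx2n : x ^ (2 * (k + 1)) = x ^ (2 * (k + 1) - 1) * x := by
      rw [← pow_succ, show 2 * (k + 1) - 1 + 1 = 2 * (k + 1) from by omega]
    have hpow1 : ((4 : ℝ) * x ^ 2 / π ^ 2) ^ (k + 1)
        = (2:ℝ) ^ (2 * (k + 1)) * x ^ (2 * (k + 1)) / π ^ (2 * (k + 1)) := by
      rw [show (4 : ℝ) * x ^ 2 = (2 * x) ^ 2 by ring, div_pow, ← pow_mul, mul_pow, ← pow_mul,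
        mul_comm 2 (k + 1), pow_mul, pow_mul, ← mul_pow, ← mul_pow, mul_comm (k + 1) 2]
    have h2half : (2:ℝ) ^ (2 * (k + 1) - 1) = 2 ^ (2 * (k + 1)) / 2 := by
      rw [eq_div_iff (two_ne_zero), ← pow_succ,
        show 2 * (k + 1) - 1 + 1 = 2 * (k + 1) from by omega]
    rw [hpow1, hx2n, h2half]
    have hπn : (π:ℝ) ^ (2 * (k + 1)) ≠ 0 := by positivity
    field_simp
  rw [hfun, hval] at h
  exact h

lemma geom_fiber (x : ℝ) (hx0 : 0 < x) (hx : x < π / 2) (m : ℕ) :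
    HasSum (fun k : ℕ => 2 / x * (4 * x ^ 2 / (((2 * m + 1 : ℕ) : ℝ) ^ 2 * π ^ 2)) ^ (k + 1))
      (8 * x / (((2 * m + 1 : ℕ) : ℝ) ^ 2 * π ^ 2 - 4 * x ^ 2)) := by
  have hπ := pi_pos
  have habs : |x| < π / 2 := by rw [abs_of_pos hx0]; exact hx
  have hd := denom_pos habs m
  have hA : (0:ℝ) < ((2 * m + 1 : ℕ) : ℝ) ^ 2 * π ^ 2 := by positivity
  set q : ℝ := 4 * x ^ 2 / (((2 * m + 1 : ℕ) : ℝ) ^ 2 * π ^ 2) with hq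
  have hq0 : 0 ≤ q := by positivity
  have hq1 : q < 1 := by rw [hq, div_lt_one hA]; linarith
  have h := (hasSum_geometric_of_lt_one hq0 hq1).mul_left (2 / x * q)
  have hfun : (fun k : ℕ => 2 / x * q * q ^ k) = fun k : ℕ => 2 / x * q ^ (k + 1) := by
    funext k; rw [pow_succ]; ring
  have hval : 2 / x * q * (1 - q)⁻¹
      = 8 * x / (((2 * m + 1 : ℕ) : ℝ) ^ 2 * π ^ 2 - 4 * x ^ 2) := by
    have h1q : 1 - q = (((2 * m + 1 : ℕ) : ℝ) ^ 2 * π ^ 2 - 4 * x ^ 2)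
        / (((2 * m + 1 : ℕ) : ℝ) ^ 2 * π ^ 2) := by
      rw [hq]; field_simp
    rw [h1q, hq, inv_div, div_mul_div_comm, div_mul_div_comm,
      div_eq_div_iff
        (mul_ne_zero (mul_ne_zero (ne_of_gt hx0) (ne_of_gt hA)) (ne_of_gt hd)) (ne_of_gt hd)]
    ring
  rw [hfun, hval] at h
  exact h

end TanHelpers

/-- For `0 < |x| < π/2`,
`tan x = ∑_{k≥1} 2^(2k)·(2^(2k)-1)·|B_{2k}|/(2k)! · x^(2k-1)`,
where `B_{2k}` are the Bernoulli numbers. -/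
theorem stmt_4 (x : ℝ) (hx0 : 0 < |x|) (hx : |x| < π / 2) :
    HasSum (fun k : ℕ =>
      (2 : ℝ) ^ (2 * (k + 1)) * ((2 : ℝ) ^ (2 * (k + 1)) - 1) *
        |((bernoulli (2 * (k + 1)) : ℚ) : ℝ)| / (Nat.factorial (2 * (k + 1)) : ℝ) *
        x ^ (2 * (k + 1) - 1))
      (Real.tan x) := by
  have hmain : ∀ y : ℝ, 0 < y → y < π / 2 → HasSum (fun k : ℕ =>
      (2 : ℝ) ^ (2 * (k + 1)) * ((2 : ℝ) ^ (2 * (k + 1)) - 1) *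
        |((bernoulli (2 * (k + 1)) : ℚ) : ℝ)| / (Nat.factorial (2 * (k + 1)) : ℝ) *
        y ^ (2 * (k + 1) - 1)) (Real.tan y) := by
    intro y hy0 hy
    have hyabs : |y| < π / 2 := by rw [abs_of_pos hy0]; exact hy
    set F : ℕ × ℕ → ℝ :=
      fun p => 2 / y * (4 * y ^ 2 / (((2 * p.2 + 1 : ℕ) : ℝ) ^ 2 * π ^ 2)) ^ (p.1 + 1) with hF
    have hπ := pi_pos
    have hF0 : ∀ p, 0 ≤ F p := fun p => by
      rw [hF]
      positivity
    have hfm : ∀ m : ℕ, HasSum (fun k => F (k, m))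
        (8 * y / (((2 * m + 1 : ℕ) : ℝ) ^ 2 * π ^ 2 - 4 * y ^ 2)) :=
      fun m => geom_fiber y hy0 hy m
    have hfk : ∀ k : ℕ, HasSum (fun m => F (k, m))
        ((2 : ℝ) ^ (2 * (k + 1)) * ((2 : ℝ) ^ (2 * (k + 1)) - 1) *
          |((bernoulli (2 * (k + 1)) : ℚ) : ℝ)| / (Nat.factorial (2 * (k + 1)) : ℝ) *
          y ^ (2 * (k + 1) - 1)) :=
      fun k => fiber_hasSum y (ne_of_gt hy0) k
    have htan := tan_pf y hyabs
    -- summability of the swapped family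
    have hswap : Summable (fun p : ℕ × ℕ => F (p.2, p.1)) := by
      rw [summable_prod_of_nonneg (fun p => hF0 _)]
      constructor
      · intro m; exact (hfm m).summable
      · apply Summable.congr htan.summable
        intro m
        exact ((hfm m).tsum_eq).symm
    have hFsummable : Summable F := by
      have := (Equiv.prodComm ℕ ℕ).summable_iff.2 hswap
      apply this.congr
      intro p
      rfl
    have hFsum : HasSum F (∑' p, F p) := hFsummable.hasSum
    have hswapsum : HasSum (fun p : ℕ × ℕ => F (p.2, p.1)) (∑' p, F p) := by
      have := ((Equiv.prodComm ℕ ℕ).hasSum_iff (f := F) (a := ∑' p, F p)).2 hFsum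
      apply this.congr_fun
      intro p
      rfl
    have h1 : HasSum (fun m : ℕ => 8 * y / (((2 * m + 1 : ℕ) : ℝ) ^ 2 * π ^ 2 - 4 * y ^ 2))
        (∑' p, F p) := hswapsum.prod_fiberwise fun m => hfm m
    have h2 : (∑' p, F p) = tan y := h1.unique htan
    have h3 := hFsum.prod_fiberwise fun k => hfk k
    rwa [h2] at h3
  rcases lt_or_gt_of_ne (fun h => by rw [h] at hx0; simp at hx0 : x ≠ 0) with hneg | hpos
  · have h := hmain (-x) (by linarith) (by rw [abs_lt] at hx; linarith)
    have hodd : ∀ k : ℕ, Odd (2 * (k + 1) - 1) := fun k => ⟨k, by omega⟩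
    have := h.neg
    rw [Real.tan_neg, neg_neg] at this
    apply this.congr_fun
    intro k
    rw [(hodd k).neg_pow]
    ring
  · exact hmain x hpos (abs_lt.1 hx).2
end

section
/- Let u : ℕ → ℝ be defined by u(0) = 1 and (2n+1)·u(n) = (1/2)·∑_{k=0}^{n−1} u(k)·u(n−1−k) for n ≥ 1. Then lim_{n→∞} log((2n+1)!·u(n)) / (n·log n) = 2. -/
open Real Filter Finset

private lemma ubounds_aux (u : ℕ → ℝ) (hu0 : u 0 = 1)
    (hurec : ∀ n : ℕ, 1 ≤ n →
      (2 * (n : ℝ) + 1) * u n = (1 / 2) * ∑ k ∈ Finset.range n, u k * u (n - 1 - k)) :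
    ∀ n, (1/6:ℝ)^n ≤ u n ∧ u n ≤ 1 := by
  intro n
  induction n using Nat.strong_induction_on with
  | _ n ih =>
    rcases Nat.eq_zero_or_pos n with h0 | h1
    · subst h0; simp [hu0]
    have h := hurec n h1
    have hP : (0:ℝ) < (1/6:ℝ)^(n-1) := by positivity
    have hn1 : (1:ℝ) ≤ (n:ℝ) := by exact_mod_cast h1
    have hlb : (n:ℝ) * (1/6:ℝ)^(n-1) ≤ ∑ k ∈ Finset.range n, u k * u (n - 1 - k) := by
      calc (n:ℝ) * (1/6:ℝ)^(n-1) = ∑ _k ∈ Finset.range n, (1/6:ℝ)^(n-1) := by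
            rw [Finset.sum_const, Finset.card_range, nsmul_eq_mul]
        _ ≤ _ := by
            apply Finset.sum_le_sum
            intro k hk
            have hk' : k < n := Finset.mem_range.mp hk
            have h1k := ih k hk'
            have h2k := ih (n-1-k) (by omega)
            have hsplit : (1/6:ℝ)^(n-1) = (1/6:ℝ)^k * (1/6:ℝ)^(n-1-k) := by
              rw [← pow_add]; congr 1; omega
            rw [hsplit]
            exact mul_le_mul h1k.1 h2k.1 (by positivity)
              (le_trans (by positivity) h1k.1)
    have hub : ∑ k ∈ Finset.range n, u k * u (n - 1 - k) ≤ (n:ℝ) := by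
      calc ∑ k ∈ Finset.range n, u k * u (n - 1 - k)
          ≤ ∑ _k ∈ Finset.range n, (1:ℝ) := by
            apply Finset.sum_le_sum
            intro k hk
            have hk' : k < n := Finset.mem_range.mp hk
            have h1k := ih k hk'
            have h2k := ih (n-1-k) (by omega)
            have hp1 : (0:ℝ) ≤ u k := le_trans (by positivity) h1k.1
            have hp2 : (0:ℝ) ≤ u (n-1-k) := le_trans (by positivity) h2k.1
            nlinarith [h1k.2, h2k.2]
        _ = (n:ℝ) := by rw [Finset.sum_const, Finset.card_range, nsmul_eq_mul, mul_one]
    have hc : (0:ℝ) < 2*(n:ℝ)+1 := by linarith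
    constructor
    · have hkey : (2*(n:ℝ)+1) * ((1/6:ℝ)^n) ≤ (2*(n:ℝ)+1) * u n := by
        rw [h]
        have hpow : (1/6:ℝ)^n = (1/6:ℝ) * (1/6:ℝ)^(n-1) := by
          rw [← pow_succ']; congr 1; omega
        rw [hpow]
        nlinarith [hlb, hP, mul_nonneg (show (0:ℝ) ≤ (n:ℝ)-1 by linarith) hP.le]
      exact le_of_mul_le_mul_left hkey hc
    · have hkey : (2*(n:ℝ)+1) * u n ≤ (2*(n:ℝ)+1) * 1 := by
        rw [h, mul_one]; linarith [hub]
      exact le_of_mul_le_mul_left hkey hc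

/-- For the Taylor coefficients `u n` of `√2·tan(t/√2)`,
`log ((2n+1)!·u n) / (n·log n) → 2`. -/
theorem stmt_11 (u : ℕ → ℝ) (hu0 : u 0 = 1)
    (hurec : ∀ n : ℕ, 1 ≤ n →
      (2 * (n : ℝ) + 1) * u n = (1 / 2) * ∑ k ∈ Finset.range n, u k * u (n - 1 - k)) :
    Filter.Tendsto
      (fun n : ℕ =>
        Real.log ((Nat.factorial (2 * n + 1) : ℝ) * u n) / ((n : ℝ) * Real.log n))
      Filter.atTop (nhds 2) := by
  have hb := ubounds_aux u hu0 hurec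
  have hupos : ∀ n, 0 < u n := fun n => lt_of_lt_of_le (by positivity) (hb n).1
  have hcast : Tendsto (fun n : ℕ => (n:ℝ)) atTop atTop := tendsto_natCast_atTop_atTop
  have halog : Tendsto (fun n : ℕ => Real.log n) atTop atTop :=
    Real.tendsto_log_atTop.comp hcast
  have hnl : Tendsto (fun n : ℕ => (n:ℝ) * Real.log n) atTop atTop :=
    Filter.Tendsto.atTop_mul_atTop₀ hcast halog
  have hinv : Tendsto (fun n : ℕ => 1/(n:ℝ)) atTop (nhds 0) := by
    exact tendsto_one_div_atTop_nhds_zero_nat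
  -- f1 : (2n+1)/n → 2
  have f1 : Tendsto (fun n : ℕ => (2*(n:ℝ)+1)/(n:ℝ)) atTop (nhds 2) := by
    have : Tendsto (fun n : ℕ => 2 + 1/(n:ℝ)) atTop (nhds (2+0)) :=
      tendsto_const_nhds.add hinv
    rw [add_zero] at this
    apply this.congr'
    filter_upwards [eventually_ge_atTop 1] with n hn
    have hn0 : (n:ℝ) ≠ 0 := by positivity
    field_simp
  -- f2 : log(2n+1)/log n → 1
  have f2 : Tendsto (fun n : ℕ => Real.log (2*(n:ℝ)+1)/Real.log n) atTop (nhds 1) := by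
    have hl2 : Tendsto (fun n : ℕ => Real.log (2 + 1/(n:ℝ))) atTop (nhds (Real.log 2)) := by
      have : Tendsto (fun n : ℕ => 2 + 1/(n:ℝ)) atTop (nhds 2) := by
        simpa using tendsto_const_nhds.add hinv
      exact ((Real.continuousAt_log (by norm_num)).tendsto.comp this)
    have hquot : Tendsto (fun n : ℕ => Real.log (2 + 1/(n:ℝ)) / Real.log n) atTop (nhds 0) :=
      hl2.div_atTop halog
    have : Tendsto (fun n : ℕ => 1 + Real.log (2 + 1/(n:ℝ)) / Real.log n) atTop (nhds (1+0)) :=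
      tendsto_const_nhds.add hquot
    rw [add_zero] at this
    apply this.congr'
    filter_upwards [eventually_ge_atTop 2] with n hn
    have hn0 : (n:ℝ) ≠ 0 := by positivity
    have hn1 : (1:ℝ) < (n:ℝ) := by exact_mod_cast hn
    have hlogn : Real.log n ≠ 0 := ne_of_gt (Real.log_pos hn1)
    have hsplit : Real.log (2*(n:ℝ)+1) = Real.log n + Real.log (2 + 1/(n:ℝ)) := by
      rw [← Real.log_mul hn0 (by positivity)]
      congr 1
      field_simp
    rw [hsplit, add_div, div_self hlogn]
  have hilog : Tendsto (fun n : ℕ => 1/Real.log n) atTop (nhds 0) :=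
    tendsto_const_nhds.div_atTop halog
  -- T1
  have T1 : Tendsto (fun n : ℕ =>
      Real.log (Stirling.stirlingSeq (2*n+1)) / ((n:ℝ)*Real.log n)) atTop (nhds 0) := by
    have h2n : Tendsto (fun n : ℕ => 2*n+1) atTop atTop :=
      tendsto_atTop_mono (fun n => by simp only [id_eq]; omega) tendsto_id
    have hts : Tendsto (fun n : ℕ => Real.log (Stirling.stirlingSeq (2*n+1))) atTop
        (nhds (Real.log (Real.sqrt π))) := by
      have := (Real.continuousAt_log (by positivity : Real.sqrt π ≠ 0)).tendsto.comp
        (Stirling.tendsto_stirlingSeq_sqrt_pi.comp h2n)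
      exact this
    exact hts.div_atTop hnl
  -- T2
  have T2 : Tendsto (fun n : ℕ =>
      (1/2) * Real.log (2*(2*(n:ℝ)+1)) / ((n:ℝ)*Real.log n)) atTop (nhds 0) := by
    have hupper : Tendsto (fun n : ℕ => (3/2) * (1/(n:ℝ))) atTop (nhds 0) := by
      simpa using hinv.const_mul (3/2:ℝ)
    apply tendsto_of_tendsto_of_tendsto_of_le_of_le' tendsto_const_nhds hupper
    · filter_upwards [eventually_ge_atTop 2] with n hn
      have hn1 : (1:ℝ) < (n:ℝ) := by exact_mod_cast hn
      have hD : (0:ℝ) < (n:ℝ)*Real.log n := mul_pos (by linarith) (Real.log_pos hn1)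
      have : (0:ℝ) ≤ Real.log (2*(2*(n:ℝ)+1)) := Real.log_nonneg (by linarith)
      positivity
    · filter_upwards [eventually_ge_atTop 3] with n hn
      have hn3 : (3:ℝ) ≤ (n:ℝ) := by exact_mod_cast hn
      have hn1 : (1:ℝ) < (n:ℝ) := by linarith
      have hlpos : 0 < Real.log n := Real.log_pos hn1
      have hD : (0:ℝ) < (n:ℝ)*Real.log n := mul_pos (by linarith) hlpos
      have h9 : 9*(n:ℝ) ≤ (n:ℝ)^3 := by nlinarith [mul_le_mul hn3 hn3 (by linarith : (0:ℝ) ≤ 3) (by linarith : (0:ℝ) ≤ (n:ℝ))]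
      have hle : Real.log (2*(2*(n:ℝ)+1)) ≤ 3 * Real.log n := by
        have h' : Real.log (2*(2*(n:ℝ)+1)) ≤ Real.log ((n:ℝ)^3) := by
          apply Real.log_le_log (by linarith)
          linarith
        simpa [Real.log_pow] using h'
      rw [div_le_iff₀ hD,
        show (3/2:ℝ)*(1/(n:ℝ))*((n:ℝ)*Real.log n) = (3/2)*Real.log n by
          field_simp]
      linarith
  -- T3
  have T3 : Tendsto (fun n : ℕ =>
      (2*(n:ℝ)+1) * Real.log (2*(n:ℝ)+1) / ((n:ℝ)*Real.log n)) atTop (nhds 2) := by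
    have := f1.mul f2
    rw [mul_one] at this
    apply this.congr
    intro n
    rw [← mul_div_mul_comm]
  -- T4
  have T4 : Tendsto (fun n : ℕ => (2*(n:ℝ)+1) / ((n:ℝ)*Real.log n)) atTop (nhds 0) := by
    have := f1.mul hilog
    rw [mul_zero] at this
    apply this.congr
    intro n
    rw [div_mul_div_comm, mul_one]
  -- T5
  have T5 : Tendsto (fun n : ℕ => Real.log (u n) / ((n:ℝ)*Real.log n)) atTop (nhds 0) := by
    have hlower : Tendsto (fun n : ℕ => (-Real.log 6)/Real.log n) atTop (nhds 0) :=
      tendsto_const_nhds.div_atTop halog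
    apply tendsto_of_tendsto_of_tendsto_of_le_of_le' hlower tendsto_const_nhds
    · filter_upwards [eventually_ge_atTop 2] with n hn
      have hn1 : (1:ℝ) < (n:ℝ) := by exact_mod_cast hn
      have hn0 : (n:ℝ) ≠ 0 := by positivity
      have hlpos : 0 < Real.log n := Real.log_pos hn1
      have hnum : (n:ℝ) * (-Real.log 6) ≤ Real.log (u n) := by
        have h1 : Real.log ((1/6:ℝ)^n) ≤ Real.log (u n) :=
          Real.log_le_log (by positivity) (hb n).1
        rw [Real.log_pow] at h1
        have : Real.log (1/6:ℝ) = -Real.log 6 := by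
          rw [one_div, Real.log_inv]
        rw [this] at h1
        exact h1
      calc (-Real.log 6)/Real.log n = ((n:ℝ) * (-Real.log 6))/((n:ℝ)*Real.log n) := by
            rw [mul_div_mul_left _ _ hn0]
        _ ≤ Real.log (u n) / ((n:ℝ)*Real.log n) := by
            have hD : (0:ℝ) < (n:ℝ)*Real.log n := mul_pos (by linarith) hlpos
            gcongr
    · filter_upwards [eventually_ge_atTop 2] with n hn
      have hn1 : (1:ℝ) < (n:ℝ) := by exact_mod_cast hn
      have hlpos : 0 < Real.log n := Real.log_pos hn1
      apply div_nonpos_of_nonpos_of_nonneg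
      · exact Real.log_nonpos (hupos n).le (hb n).2
      · positivity
  -- stirling decomposition of log (2n+1)!
  have hfact : ∀ m : ℕ, Real.log ((Nat.factorial (2*m+1) : ℝ)) =
      Real.log (Stirling.stirlingSeq (2*m+1)) + (1/2)*Real.log (2*(2*(m:ℝ)+1))
        + (2*(m:ℝ)+1) * Real.log ((2*(m:ℝ)+1)/Real.exp 1) := by
    intro m
    have h := Stirling.log_stirlingSeq_formula (2*m+1)
    push_cast at h ⊢
    linarith
  -- combine
  have total := (((T1.add T2).add T3).sub T4).add T5
  rw [show (0:ℝ)+0+2-0+0 = 2 by norm_num] at total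
  apply total.congr'
  filter_upwards [eventually_ge_atTop 1] with n hn
  have hn1 : (1:ℝ) ≤ (n:ℝ) := by exact_mod_cast hn
  have hfpos : (0:ℝ) < (Nat.factorial (2*n+1) : ℝ) := by
    exact_mod_cast Nat.factorial_pos (2*n+1)
  have hlogmul : Real.log ((Nat.factorial (2*n+1) : ℝ) * u n)
      = Real.log ((Nat.factorial (2*n+1) : ℝ)) + Real.log (u n) :=
    Real.log_mul (ne_of_gt hfpos) (ne_of_gt (hupos n))
  have hlogdiv : Real.log ((2*(n:ℝ)+1)/Real.exp 1) = Real.log (2*(n:ℝ)+1) - 1 := by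
    rw [Real.log_div (by linarith) (Real.exp_ne_zero 1), Real.log_exp]
  rw [hlogmul, hfact n, hlogdiv]
  ring
end

section
/- Let h : ℕ → ℝ be a nonnegative sequence with h(0) = 1 satisfying (2n+1)·h(n) ≥ (1/2)·∑_{k=0}^{n−1} h(k)·h(n−1−k) for every n ≥ 1, and suppose the power series ξ(t) = ∑_{n≥0} h(n)·t^{2n+1} has radius of convergence R > 0. Then for every t ∈ [0, R), ξ'(t) ≥ 1 + ξ(t)²/2. -/
open Real Finset

private lemma aux_deriv (h : ℕ → ℝ) (hnn : ∀ n, 0 ≤ h n) (h0 : h 0 = 1)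
    (R : ℝ) (hR : 0 < R)
    (hconv : ∀ t : ℝ, |t| < R → Summable fun n : ℕ => h n * t ^ (2 * n + 1))
    (t : ℝ) (ht0 : 0 ≤ t) (htR : t < R) :
    HasDerivAt (fun s : ℝ => ∑' n : ℕ, h n * s ^ (2 * n + 1))
      (∑' n : ℕ, h n * ((2 * (n:ℝ) + 1) * t ^ (2 * n))) t ∧
    Summable (fun n : ℕ => h n * ((2 * (n:ℝ) + 1) * t ^ (2 * n))) := by
  obtain ⟨r, htr, hrR⟩ := exists_between htR
  obtain ⟨r', hrr', hr'R⟩ := exists_between hrR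
  have hrpos : 0 < r := lt_of_le_of_lt ht0 htr
  have hr'pos : 0 < r' := hrpos.trans hrr'
  have hS' : Summable fun n : ℕ => h n * r' ^ (2 * n + 1) := by
    apply hconv; rw [abs_of_pos hr'pos]; exact hr'R
  set C : ℝ := ∑' n : ℕ, h n * r' ^ (2 * n + 1) with hC
  have hterm_le : ∀ n, h n * r' ^ (2 * n + 1) ≤ C := fun n =>
    Summable.le_tsum hS' n fun m _ => mul_nonneg (hnn m) (by positivity)
  have hCr' : 0 ≤ C / r' := by
    apply div_nonneg _ hr'pos.le
    exact tsum_nonneg fun n => mul_nonneg (hnn n) (by positivity)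
  set q : ℝ := (r / r') ^ 2 with hq
  have hq0 : 0 ≤ q := sq_nonneg _
  have hq1 : q < 1 := by
    rw [hq, sq_lt_one_iff_abs_lt_one, abs_of_pos (div_pos hrpos hr'pos)]
    exact (div_lt_one hr'pos).2 hrr'
  set u : ℕ → ℝ := fun n => (2 * (n:ℝ) + 1) * (C / r') * q ^ n with hu
  have hu_sum : Summable u := by
    have h1 : Summable fun n : ℕ => (n:ℝ) * q ^ n := by
      simpa using summable_pow_mul_geometric_of_norm_lt_one 1
        (by rwa [Real.norm_of_nonneg hq0] : ‖q‖ < 1)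
    have h2 : Summable fun n : ℕ => q ^ n := summable_geometric_of_lt_one hq0 hq1
    have := ((h1.mul_left 2).add h2).mul_left (C / r')
    apply this.congr
    intro n; rw [hu]; ring
  set g' : ℕ → ℝ → ℝ := fun n y => h n * ((2 * (n:ℝ) + 1) * y ^ (2 * n)) with hg'
  have hderiv : ∀ n y, HasDerivAt (fun s : ℝ => h n * s ^ (2 * n + 1)) (g' n y) y := by
    intro n y
    have := (hasDerivAt_pow (2 * n + 1) y).const_mul (h n)
    refine this.congr_deriv ?_
    rw [hg']
    push_cast
    ring_nf
  have hbound : ∀ n y, y ∈ Set.Ioo (-r) r → ‖g' n y‖ ≤ u n := by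
    intro n y hy
    have hyr : |y| ≤ r := by rw [abs_le]; exact ⟨hy.1.le, hy.2.le⟩
    have key : h n * r ^ (2 * n) ≤ C / r' * q ^ n := by
      have hqe : q ^ n = r ^ (2 * n) / r' ^ (2 * n) := by
        rw [hq, div_pow, div_pow, ← pow_mul, ← pow_mul]
      have e : h n * r ^ (2 * n) = (h n * r' ^ (2 * n + 1)) / r' * q ^ n := by
        rw [hqe, pow_succ]
        field_simp
      rw [e]
      gcongr
      exact hterm_le n
    simp only [hg', hu, norm_mul, norm_pow, Real.norm_eq_abs, abs_of_nonneg (hnn n),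
      abs_of_nonneg (by positivity : (0:ℝ) ≤ 2 * (n:ℝ) + 1)]
    calc h n * ((2 * (n:ℝ) + 1) * |y| ^ (2 * n))
        ≤ h n * ((2 * (n:ℝ) + 1) * r ^ (2 * n)) := by
          exact mul_le_mul_of_nonneg_left (mul_le_mul_of_nonneg_left
            (pow_le_pow_left₀ (abs_nonneg y) hyr _) (by positivity)) (hnn n)
      _ = (2 * (n:ℝ) + 1) * (h n * r ^ (2 * n)) := by ring
      _ ≤ (2 * (n:ℝ) + 1) * (C / r' * q ^ n) := mul_le_mul_of_nonneg_left key (by positivity)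
      _ = (2 * (n:ℝ) + 1) * (C / r') * q ^ n := by ring
  have ht_mem : t ∈ Set.Ioo (-r) r := ⟨by linarith, htr⟩
  have h0_mem : (0:ℝ) ∈ Set.Ioo (-r) r := ⟨by linarith, hrpos⟩
  have hsum0 : Summable fun n : ℕ => h n * (0:ℝ) ^ (2 * n + 1) := by
    apply summable_of_ne_finset_zero (s := ∅)
    intro n _
    simp
  constructor
  · exact hasDerivAt_tsum_of_isPreconnected hu_sum isOpen_Ioo isPreconnected_Ioo
      (fun n y hy => hderiv n y) hbound h0_mem hsum0 ht_mem
  · exact Summable.of_norm_bounded hu_sum (fun n => hbound n t ht_mem)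

/-- If `h` is a nonnegative sequence with `h 0 = 1` satisfying the coefficient
inequality of recurrence B, and the power series `ξ(t) = ∑ h n·t^(2n+1)`
converges for `|t| < R` with `R > 0`, then `ξ'(t) ≥ 1 + ξ(t)²/2` on `[0, R)`. -/
theorem stmt_14 (h : ℕ → ℝ) (hnn : ∀ n, 0 ≤ h n) (h0 : h 0 = 1)
    (hrec : ∀ n : ℕ, 1 ≤ n →
      (2 * (n : ℝ) + 1) * h n ≥ (1 / 2) * ∑ k ∈ Finset.range n, h k * h (n - 1 - k))
    (R : ℝ) (hR : 0 < R)
    (hconv : ∀ t : ℝ, |t| < R → Summable fun n : ℕ => h n * t ^ (2 * n + 1)) :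
    ∀ t ∈ Set.Ico (0 : ℝ) R,
      deriv (fun s : ℝ => ∑' n : ℕ, h n * s ^ (2 * n + 1)) t ≥
        1 + (∑' n : ℕ, h n * t ^ (2 * n + 1)) ^ 2 / 2 := by
  rintro t ⟨ht0, htR⟩
  obtain ⟨hderiv, hFsum⟩ := aux_deriv h hnn h0 R hR hconv t ht0 htR
  rw [hderiv.deriv]
  set F : ℕ → ℝ := fun n => h n * ((2 * (n:ℝ) + 1) * t ^ (2 * n)) with hF
  -- Cauchy product
  set f : ℕ → ℝ := fun n => h n * t ^ (2 * n + 1) with hf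
  have hfnn : ∀ n, 0 ≤ f n := fun n => mul_nonneg (hnn n) (by positivity)
  have hf_norm : Summable fun n => ‖f n‖ := by
    refine (hconv t (by rwa [abs_of_nonneg ht0])).congr fun n => ?_
    exact (Real.norm_of_nonneg (hfnn n)).symm
  have hinner : ∀ n : ℕ, (∑ k ∈ range (n + 1), f k * f (n - k)) =
      (∑ k ∈ range (n + 1), h k * h (n - k)) * t ^ (2 * n + 2) := by
    intro n
    rw [Finset.sum_mul]
    refine Finset.sum_congr rfl fun k hk => ?_
    have hkn : k ≤ n := Nat.lt_succ_iff.mp (Finset.mem_range.mp hk)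
    rw [hf]
    have : t ^ (2 * k + 1) * t ^ (2 * (n - k) + 1) = t ^ (2 * n + 2) := by
      rw [← pow_add]
      congr 1
      omega
    calc h k * t ^ (2 * k + 1) * (h (n - k) * t ^ (2 * (n - k) + 1))
        = h k * h (n - k) * (t ^ (2 * k + 1) * t ^ (2 * (n - k) + 1)) := by ring
      _ = h k * h (n - k) * t ^ (2 * n + 2) := by rw [this]
  have hsq : (∑' n : ℕ, f n) ^ 2 =
      ∑' n : ℕ, (∑ k ∈ range (n + 1), h k * h (n - k)) * t ^ (2 * n + 2) := by
    rw [sq, tsum_mul_tsum_eq_tsum_sum_range_of_summable_norm hf_norm hf_norm]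
    exact tsum_congr hinner
  have hS2 : Summable fun n : ℕ =>
      (∑ k ∈ range (n + 1), h k * h (n - k)) * t ^ (2 * n + 2) :=
    ((summable_norm_sum_mul_range_of_summable_norm hf_norm hf_norm).of_norm).congr hinner
  -- split off first term of F
  have hsplit : (∑' n : ℕ, F n) = 1 + ∑' n : ℕ, F (n + 1) := by
    have hF0 : F 0 = 1 := by simp [hF, h0]
    rw [Summable.tsum_eq_zero_add hFsum, hF0]
  rw [hsplit, hsq, ge_iff_le]
  have hFs : Summable fun n : ℕ => F (n + 1) := (summable_nat_add_iff 1).mpr hFsum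
  have hterm : ∀ n : ℕ,
      (∑ k ∈ range (n + 1), h k * h (n - k)) * t ^ (2 * n + 2) / 2 ≤ F (n + 1) := by
    intro n
    have hr := hrec (n + 1) (Nat.le_add_left 1 n)
    have hsum_eq : (∑ k ∈ range (n + 1), h k * h ((n + 1) - 1 - k)) =
        ∑ k ∈ range (n + 1), h k * h (n - k) := by
      refine Finset.sum_congr rfl fun k hk => ?_
      simp
    rw [hsum_eq] at hr
    have htp : (0:ℝ) ≤ t ^ (2 * n + 2) := by positivity
    have := mul_le_mul_of_nonneg_right hr htp
    calc (∑ k ∈ range (n + 1), h k * h (n - k)) * t ^ (2 * n + 2) / 2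
        = ((1/2) * ∑ k ∈ range (n + 1), h k * h (n - k)) * t ^ (2 * n + 2) := by ring
      _ ≤ (2 * ((n:ℝ) + 1) + 1) * h (n + 1) * t ^ (2 * n + 2) := by exact_mod_cast this
      _ = F (n + 1) := by
          rw [hF]
          push_cast
          ring_nf
  have hmain : (∑' n : ℕ, (∑ k ∈ range (n + 1), h k * h (n - k)) * t ^ (2 * n + 2)) / 2
      ≤ ∑' n : ℕ, F (n + 1) := by
    rw [← tsum_div_const]
    exact Summable.tsum_le_tsum hterm (hS2.div_const 2) hFs
  linarith
end
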